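/- arXiv:2410.22729 — 3 statements merged into one kernel-verified Lean document; each statement's English description precedes it below -/
import Mathlib

section
/- Let d ≥ 1 and let μ be a probability measure on ℝᵈ whose topological support is a finite set S. Then the following are equivalent: (i) the only real d×d matrix A such that the pushforward of μ under x ↦ exp(tA)·x equals μ for all t ≥ 0 is A = 0; (ii) the linear span of S is all of ℝᵈ. -/
/-!
Since `exp (t • A)` is continuous and preserves `μ`, it maps the support `S` into itself. For
`x ∈ S` the orbit `t ↦ exp (t • A) x` is then a continuous path from the connected set `[0, ∞)`
into the finite set `S`, hence constant, and differentiating at `t = 0` gives `A x = 0`. So the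
matrices preserving `μ` are exactly those vanishing on `S` (conversely, such an `A` fixes `S`
pointwise and `μ` is concentrated on `S`), and a nonzero one exists iff `span S ≠ ℝᵈ`.
-/

open Matrix NormedSpace MeasureTheory

/-- The topological support of a measure: the set of points all of whose
neighborhoods have positive measure. -/
def measureSupport {α : Type*} [TopologicalSpace α] [MeasurableSpace α]
    (μ : Measure α) : Set α :=
  {x | ∀ U ∈ nhds x, 0 < μ U}

theorem measureSupport_eq_support {X : Type*} [TopologicalSpace X] [MeasurableSpace X]
    (μ : Measure X) : measureSupport μ = μ.support :=
  Set.ext fun x => (Measure.mem_support_iff_forall x).symm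

namespace MeasureTheory.Measure

variable {X : Type*} [TopologicalSpace X] [MeasurableSpace X]

theorem mapsTo_support_map [OpensMeasurableSpace X] {Y : Type*} [TopologicalSpace Y]
    [MeasurableSpace Y] [BorelSpace Y] (μ : Measure X) {f : X → Y} (hf : Continuous f) :
    Set.MapsTo f μ.support (μ.map f).support := by
  intro x hx
  rw [mem_support_iff_forall] at hx ⊢
  exact fun U hU => (hx _ (hf.continuousAt hU)).trans_le (le_map_apply hf.aemeasurable U)

theorem map_eq_self_of_eqOn_support [HereditarilyLindelofSpace X] (μ : Measure X) {f : X → X}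
    (hf : Set.EqOn f id μ.support) : μ.map f = μ := by
  rw [map_congr (Filter.mem_of_superset support_mem_ae hf), map_id]

end MeasureTheory.Measure

theorem Submodule.exists_ne_zero_le_ker_of_ne_top {K V : Type*} [Field K] [AddCommGroup V]
    [Module K V] {p : Submodule K V} (hp : p ≠ ⊤) :
    ∃ f : Module.End K V, f ≠ 0 ∧ p ≤ LinearMap.ker f := by
  obtain ⟨v, -, hv⟩ := SetLike.exists_of_lt hp.lt_top
  obtain ⟨φ, hφv, hpφ⟩ := Submodule.exists_le_ker_of_notMem hv
  have hv0 : v ≠ 0 := fun h => hv (h ▸ p.zero_mem)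
  refine ⟨φ.smulRight v, fun h => ?_, fun y hy => ?_⟩
  · simpa [hφv, hv0] using LinearMap.congr_fun h v
  · simp [LinearMap.mem_ker.1 (hpφ hy)]

namespace Matrix

variable {n : Type*} [Fintype n] [DecidableEq n]

theorem eq_zero_of_mulVec_eq_zero_of_span_eq_top {R : Type*} [CommRing R] {A : Matrix n n R}
    {S : Set (n → R)} (hS : Submodule.span R S = ⊤) (hA : ∀ x ∈ S, A *ᵥ x = 0) : A = 0 :=
  toLin'.injective <| LinearMap.ext_on hS fun x hx => by simpa using hA x hx

theorem exists_ne_zero_mulVec_eq_zero_of_span_ne_top {K : Type*} [Field K] {S : Set (n → K)}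
    (hS : Submodule.span K S ≠ ⊤) : ∃ A : Matrix n n K, A ≠ 0 ∧ ∀ x ∈ S, A *ᵥ x = 0 := by
  obtain ⟨f, hf0, hker⟩ := Submodule.exists_ne_zero_le_ker_of_ne_top hS
  refine ⟨LinearMap.toMatrix' f, by simpa using hf0, fun x hx => ?_⟩
  simpa using hker (Submodule.subset_span hx)

section

-- `exp` on matrices does not depend on a norm; one is chosen only to use the Banach-algebra calculus.
attribute [local instance] Matrix.linftyOpNormedRing Matrix.linftyOpNormedAlgebra

theorem hasDerivAt_exp_smul_mulVec (A : Matrix n n ℝ) (x : n → ℝ) (t : ℝ) :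
    HasDerivAt (fun s : ℝ => exp (s • A) *ᵥ x) (exp (t • A) *ᵥ (A *ᵥ x)) t := by
  let evalAt : Matrix n n ℝ →L[ℝ] n → ℝ := ((mulVecBilin ℝ ℝ).flip x).toContinuousLinearMap
  rw [mulVec_mulVec]
  exact evalAt.hasFDerivAt.comp_hasDerivAt t (hasDerivAt_exp_smul_const (𝕂 := ℝ) A t)

end

theorem continuous_exp_smul_mulVec (A : Matrix n n ℝ) (x : n → ℝ) :
    Continuous fun t : ℝ => exp (t • A) *ᵥ x :=
  continuous_iff_continuousAt.2 fun t => (hasDerivAt_exp_smul_mulVec A x t).continuousAt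

theorem exp_smul_mulVec_of_mulVec_eq_zero {A : Matrix n n ℝ} {x : n → ℝ} (hx : A *ᵥ x = 0)
    (t : ℝ) : exp (t • A) *ᵥ x = x := by
  have hconst := is_const_of_deriv_eq_zero
    (fun s => (hasDerivAt_exp_smul_mulVec A x s).differentiableAt)
    (fun s => by rw [(hasDerivAt_exp_smul_mulVec A x s).deriv, hx, mulVec_zero]) t 0
  simpa using hconst

theorem mulVec_eq_zero_of_exp_smul_mulVec_eq_self {A : Matrix n n ℝ} {x : n → ℝ}
    (hx : ∀ t : ℝ, 0 ≤ t → exp (t • A) *ᵥ x = x) : A *ᵥ x = 0 := by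
  have hderiv := (hasDerivAt_exp_smul_mulVec A x 0).hasDerivWithinAt (s := Set.Ici 0)
  have hconst : HasDerivWithinAt (fun s : ℝ => exp (s • A) *ᵥ x) 0 (Set.Ici 0) 0 :=
    (hasDerivWithinAt_const 0 _ x).congr hx (hx 0 le_rfl)
  simpa using (uniqueDiffOn_Ici (0 : ℝ) 0 Set.self_mem_Ici).eq_deriv _ hderiv hconst

theorem mulVec_eq_zero_of_mapsTo_finite {A : Matrix n n ℝ} {S : Set (n → ℝ)} (hS : S.Finite)
    (hA : ∀ t : ℝ, 0 ≤ t → Set.MapsTo (exp (t • A) *ᵥ ·) S S) {x : n → ℝ} (hx : x ∈ S) :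
    A *ᵥ x = 0 := by
  refine mulVec_eq_zero_of_exp_smul_mulVec_eq_self fun t ht => ?_
  simpa using isPreconnected_Ici.constant_of_mapsTo hS.isDiscrete
    (continuous_exp_smul_mulVec A x).continuousOn (fun s hs => hA s hs hx) ht Set.self_mem_Ici

end Matrix

theorem discrete_auto_rotate_general (d : ℕ)
    (μ : Measure (Fin d → ℝ))
    (S : Set (Fin d → ℝ)) (hfin : S.Finite) (hsupp : measureSupport μ = S) :
    (∀ A : Matrix (Fin d) (Fin d) ℝ,
        (∀ t : ℝ, 0 ≤ t → Measure.map (fun x => (exp (t • A)).mulVec x) μ = μ) →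
        A = 0) ↔
      Submodule.span ℝ S = ⊤ := by
  rw [measureSupport_eq_support] at hsupp
  subst hsupp
  constructor
  · intro hA
    by_contra hspan
    obtain ⟨A, hA0, hAS⟩ := exists_ne_zero_mulVec_eq_zero_of_span_ne_top hspan
    exact hA0 <| hA A fun t _ =>
      μ.map_eq_self_of_eqOn_support fun x hx => exp_smul_mulVec_of_mulVec_eq_zero (hAS x hx) t
  · intro hspan A hA
    refine eq_zero_of_mulVec_eq_zero_of_span_eq_top hspan fun x hx =>
      mulVec_eq_zero_of_mapsTo_finite hfin (fun t ht => ?_) hx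
    have hmaps := μ.mapsTo_support_map (f := (exp (t • A) *ᵥ ·))
      (continuous_const.matrix_mulVec continuous_id)
    rwa [hA t ht] at hmaps

/-- A finitely supported probability measure is not auto-rotationally invariant
(only `A = 0` makes all `exp (t • A)` preserve it) if and only if its support
spans `ℝᵈ`. -/
theorem discrete_auto_rotate (d : ℕ) (hd : 1 ≤ d)
    (μ : Measure (Fin d → ℝ)) [IsProbabilityMeasure μ]
    (S : Set (Fin d → ℝ)) (hfin : S.Finite) (hsupp : measureSupport μ = S) :
    (∀ A : Matrix (Fin d) (Fin d) ℝ,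
        (∀ t : ℝ, 0 ≤ t → Measure.map (fun x => (exp (t • A)).mulVec x) μ = μ) →
        A = 0) ↔
      Submodule.span ℝ S = ⊤ :=
  discrete_auto_rotate_general d μ S hfin hsupp
end

section
/- Let d ≥ 1, n ≥ 1, Δt > 0, and let r₁, …, rₙ ∈ ℝᵈ be such that Ĥ = (1/(nΔt))·∑ₖ rₖrₖᵀ is positive definite. Then for every symmetric positive definite real d×d matrix H, −(n/2)·log(det H) − (1/(2Δt))·∑ₖ rₖᵀ H⁻¹ rₖ ≤ −(n/2)·log(det Ĥ) − (1/(2Δt))·∑ₖ rₖᵀ Ĥ⁻¹ rₖ, i.e. Ĥ maximizes the Gaussian log-likelihood in the diffusion matrix over all symmetric positive definite H. -/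
open Matrix
open scoped MatrixOrder

/-!
Since `(1/(2Δt)) ∑ₖ rₖ rₖᵀ = (n/2) Ĥ`, every quadratic sum is a trace,
`(1/(2Δt)) ∑ₖ rₖᵀ A rₖ = (n/2) tr (A Ĥ)`, so the claim reduces to
`log det Ĥ + d ≤ log det H + tr (H⁻¹ Ĥ)`. With `B = Ĥ^{1/2}`, the matrix `B H⁻¹ B` is positive
definite with determinant `det Ĥ / det H` and trace `tr (H⁻¹ Ĥ)`, and `log λ ≤ λ - 1` applied to
its eigenvalues gives exactly this.
-/

namespace Matrix

section Trace

variable {ι n R : Type*} [Fintype ι] [Fintype n] [CommSemiring R]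

theorem trace_mul_vecMulVec (A : Matrix n n R) (x y : n → R) :
    (A * vecMulVec x y).trace = y ⬝ᵥ A *ᵥ x := by
  rw [mul_vecMulVec, trace_vecMulVec, dotProduct_comm]

theorem sum_dotProduct_mulVec_eq_trace_mul (A : Matrix n n R) (r : ι → n → R) :
    ∑ k, r k ⬝ᵥ A *ᵥ r k = (A * ∑ k, vecMulVec (r k) (r k)).trace := by
  simp only [Matrix.mul_sum, trace_sum, trace_mul_vecMulVec]

end Trace

variable {n : Type*} [Fintype n] [DecidableEq n]

theorem PosDef.log_det_le_trace_sub_card {M : Matrix n n ℝ} (hM : M.PosDef) :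
    Real.log M.det ≤ M.trace - Fintype.card n := by
  have hev := hM.eigenvalues_pos
  rw [hM.isHermitian.det_eq_prod_eigenvalues, hM.isHermitian.trace_eq_sum_eigenvalues]
  simp only [RCLike.ofReal_real_eq_id, id_eq]
  rw [Real.log_prod fun i _ => (hev i).ne']
  calc ∑ i, Real.log (hM.isHermitian.eigenvalues i)
      ≤ ∑ i, (hM.isHermitian.eigenvalues i - 1) :=
        Finset.sum_le_sum fun i _ => Real.log_le_sub_one_of_pos (hev i)
    _ = _ := by simp [Finset.sum_sub_distrib]

theorem PosDef.log_det_add_card_le_log_det_add_trace_inv_mul {S H : Matrix n n ℝ}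
    (hS : S.PosDef) (hH : H.PosDef) :
    Real.log S.det + Fintype.card n ≤ Real.log H.det + (H⁻¹ * S).trace := by
  set B := CFC.sqrt S
  have hBB : B * B = S := CFC.sqrt_mul_sqrt_self S hS.posSemidef.nonneg
  have hBsymm : Bᴴ = B := (CFC.sqrt_nonneg S).posSemidef.isHermitian
  have hdet : (B * H⁻¹ * B).det = S.det / H.det := by
    rw [det_mul, det_mul, det_nonsing_inv, Ring.inverse_eq_inv', ← hBB, det_mul]
    ring
  have hM : (B * H⁻¹ * B).PosDef := by
    have hsemi := hH.inv.posSemidef.conjTranspose_mul_mul_same B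
    rw [hBsymm] at hsemi
    rw [hsemi.posDef_iff_det_ne_zero, hdet]
    exact (div_pos hS.det_pos hH.det_pos).ne'
  have htr : (B * H⁻¹ * B).trace = (H⁻¹ * S).trace := by
    rw [trace_mul_cycle, hBB, trace_mul_comm]
  have := hM.log_det_le_trace_sub_card
  rw [hdet, htr, Real.log_div hS.det_pos.ne' hH.det_pos.ne'] at this
  linarith

end Matrix

theorem diffusion_mle_maximizes_general (d n : ℕ)
    (Δt : ℝ) (r : Fin n → (Fin d → ℝ))
    (Hhat : Matrix (Fin d) (Fin d) ℝ)
    (hHhat : Hhat = (1 / (n * Δt)) • ∑ k, vecMulVec (r k) (r k))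
    (hpos : Hhat.PosDef) :
    ∀ H : Matrix (Fin d) (Fin d) ℝ, H.PosDef →
      -(n / 2 : ℝ) * Real.log H.det - (1 / (2 * Δt)) * ∑ k, r k ⬝ᵥ H⁻¹.mulVec (r k)
        ≤ -(n / 2 : ℝ) * Real.log Hhat.det
            - (1 / (2 * Δt)) * ∑ k, r k ⬝ᵥ Hhat⁻¹.mulVec (r k) := by
  intro H hH
  have hscale : (1 / (2 * Δt)) • ∑ k, vecMulVec (r k) (r k) = (n / 2 : ℝ) • Hhat := by
    rcases eq_or_ne n 0 with rfl | hn
    · simp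
    · rw [hHhat, smul_smul]
      congr 1
      rw [one_div, one_div, mul_inv, mul_inv]
      field_simp
  have hsum (A : Matrix (Fin d) (Fin d) ℝ) :
      (1 / (2 * Δt)) * ∑ k, r k ⬝ᵥ A *ᵥ r k = (n / 2 : ℝ) * (A * Hhat).trace := by
    rw [sum_dotProduct_mulVec_eq_trace_mul, ← smul_eq_mul, ← trace_smul, ← Matrix.mul_smul,
      hscale, Matrix.mul_smul, trace_smul, smul_eq_mul]
  have htr : (Hhat⁻¹ * Hhat).trace = d := by
    rw [nonsing_inv_mul _ hpos.det_pos.ne'.isUnit]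
    simp
  have key := hpos.log_det_add_card_le_log_det_add_trace_inv_mul hH
  rw [Fintype.card_fin] at key
  rw [hsum, hsum, htr]
  linarith [mul_le_mul_of_nonneg_left key (by positivity : (0 : ℝ) ≤ n / 2)]

/-- The closed-form diffusion estimator `Ĥ = (1/(nΔt)) ∑ rₖ rₖᵀ` maximizes the
Gaussian log-likelihood `H ↦ −(n/2)·log det H − (1/(2Δt)) ∑ₖ rₖᵀ H⁻¹ rₖ` over all
symmetric positive definite matrices `H`. -/
theorem diffusion_mle_maximizes (d n : ℕ) (hd : 1 ≤ d) (hn : 1 ≤ n)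
    (Δt : ℝ) (hΔt : 0 < Δt) (r : Fin n → (Fin d → ℝ))
    (Hhat : Matrix (Fin d) (Fin d) ℝ)
    (hHhat : Hhat = (1 / (n * Δt)) • ∑ k, vecMulVec (r k) (r k))
    (hpos : Hhat.PosDef) :
    ∀ H : Matrix (Fin d) (Fin d) ℝ, H.PosDef →
      -(n / 2 : ℝ) * Real.log H.det - (1 / (2 * Δt)) * ∑ k, r k ⬝ᵥ H⁻¹.mulVec (r k)
        ≤ -(n / 2 : ℝ) * Real.log Hhat.det
            - (1 / (2 * Δt)) * ∑ k, r k ⬝ᵥ Hhat⁻¹.mulVec (r k) :=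
  diffusion_mle_maximizes_general d n Δt r Hhat hHhat hpos
end

section
/- Let d, m ≥ 1, let G be a real d×m matrix, Σ = GGᵀ, γ ∈ ℝ, and let A be a real d×d matrix with AΣ + ΣAᵀ = 0. Let μ be a probability measure on ℝᵈ such that for every s ≥ 0 the pushforward of μ under x ↦ exp(sA)·x equals μ. Let Z be the product measure on ℝᵐ with i.i.d. standard Gaussian N(0,1) coordinates, and let ν be the pushforward of Z under w ↦ γ·(G·w). Then for every s ≥ 0, the pushforward of the convolution μ ∗ ν under x ↦ exp(sA)·x equals μ ∗ ν. -/
/-!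
If `w` is standard Gaussian on `ℝᵐ`, the characteristic function of `B w` at a dual vector `ℓ`
is `exp (-ℓᵀ B Bᵀ ℓ / 2)`, so the law of `B w` depends on `B` only through `B Bᵀ`. The condition
`A Σ + Σ Aᵀ = 0` makes `exp (s A) Σ exp (s A)ᵀ = Σ`, hence `exp (s A)` maps the law of `γ G w` to
the law of `exp (s A) γ G w`, which has the same Gram matrix `γ² Σ`. A linear map sends `μ ∗ ν` to
the convolution of the images, and both images are the original measures.
-/

open Matrix NormedSpace MeasureTheory ProbabilityTheory
open scoped NNReal

lemma exp_smul_mul_mul_transpose_exp_smul {ι : Type*} [Fintype ι] [DecidableEq ι]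
    {A S : Matrix ι ι ℝ} (hA : A * S + S * Aᵀ = 0) (s : ℝ) :
    exp (s • A) * S * (exp (s • A))ᵀ = S := by
  have h : SemiconjBy S (s • Aᵀ) (-(s • A)) := by
    rw [SemiconjBy, mul_smul_comm, eq_neg_of_add_eq_zero_right hA, neg_mul, smul_neg,
      smul_mul_assoc]
  rw [← Matrix.exp_transpose, transpose_smul]
  -- The operator norm provides the Banach algebra structure; the `exp` it yields is the same.
  have := open scoped Matrix.Norms.Operator in h.exp_neg_mul_mul_exp_eq_self
  rw [neg_neg] at this
  exact this

lemma charFunDual_gaussianReal (m : ℝ) (v : ℝ≥0) (L : StrongDual ℝ ℝ) :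
    charFunDual (gaussianReal m v) L = Complex.exp (L m * Complex.I - v * L 1 ^ 2 / 2) := by
  rw [IsGaussian.charFunDual_eq, integral_complex_ofReal,
    integral_continuousLinearMap_gaussianReal, variance_continuousLinearMap_gaussianReal]
  simp [Real.coe_toNNReal _ (sq_nonneg _), mul_comm]

section StandardGaussianImage

variable {ι κ : Type*} [Fintype ι] [Fintype κ] [DecidableEq κ]

lemma sum_sq_dotProduct_mulVec_single (ℓ : ι → ℝ) (B : Matrix ι κ ℝ) :
    ∑ j, (ℓ ⬝ᵥ B *ᵥ Pi.single j 1) ^ 2 = ℓ ⬝ᵥ (B * Bᵀ) *ᵥ ℓ := by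
  calc ∑ j, (ℓ ⬝ᵥ B *ᵥ Pi.single j 1) ^ 2 = (ℓ ᵥ* B) ⬝ᵥ (ℓ ᵥ* B) := by
        simp only [dotProduct_mulVec, dotProduct_single_one, sq]; rfl
    _ = ℓ ⬝ᵥ (B * Bᵀ) *ᵥ ℓ := by
        rw [← mulVec_mulVec, dotProduct_mulVec, mulVec_transpose]

lemma charFunDual_map_mulVec_pi_gaussianReal [DecidableEq ι] (B : Matrix ι κ ℝ)
    (L : StrongDual ℝ (ι → ℝ)) :
    charFunDual ((Measure.pi fun _ : κ => gaussianReal 0 1).map (B *ᵥ ·)) L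
      = Complex.exp (-((dotProductEquiv ℝ ι).symm L ⬝ᵥ
          (B * Bᵀ) *ᵥ (dotProductEquiv ℝ ι).symm L / 2)) := by
  set ℓ := (dotProductEquiv ℝ ι).symm L
  have hL : ∀ x, L x = ℓ ⬝ᵥ x := fun x =>
    (LinearMap.congr_fun ((dotProductEquiv ℝ ι).apply_symm_apply L.toLinearMap) x).symm
  let Bc : (κ → ℝ) →L[ℝ] ι → ℝ := LinearMap.toContinuousLinearMap B.mulVecLin
  change charFunDual (Measure.map Bc _) L = _
  rw [charFunDual_map, charFunDual_pi, ← sum_sq_dotProduct_mulVec_single]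
  simp only [charFunDual_gaussianReal, map_zero, Complex.ofReal_zero, zero_mul, zero_sub,
    NNReal.coe_one, Complex.ofReal_one, one_mul, ← Complex.exp_sum]
  push_cast
  rw [Finset.sum_div, ← Finset.sum_neg_distrib]
  congr! with j
  exact hL _

lemma map_mulVec_pi_gaussianReal_congr [DecidableEq ι] {B C : Matrix ι κ ℝ}
    (h : B * Bᵀ = C * Cᵀ) :
    (Measure.pi fun _ : κ => gaussianReal 0 1).map (B *ᵥ ·)
      = (Measure.pi fun _ : κ => gaussianReal 0 1).map (C *ᵥ ·) :=
  Measure.ext_of_charFunDual <| funext fun L => by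
    rw [charFunDual_map_mulVec_pi_gaussianReal, charFunDual_map_mulVec_pi_gaussianReal, h]

lemma map_mulVec_map_mulVec_pi_gaussianReal [DecidableEq ι] {T : Matrix ι ι ℝ}
    {B : Matrix ι κ ℝ} (hT : T * (B * Bᵀ) * Tᵀ = B * Bᵀ) :
    ((Measure.pi fun _ : κ => gaussianReal 0 1).map (B *ᵥ ·)).map (T *ᵥ ·)
      = (Measure.pi fun _ : κ => gaussianReal 0 1).map (B *ᵥ ·) := by
  rw [Measure.map_map (by fun_prop) (by fun_prop)]
  simp only [Function.comp_def, mulVec_mulVec]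
  refine map_mulVec_pi_gaussianReal_congr ?_
  rwa [transpose_mul, ← Matrix.mul_assoc, Matrix.mul_assoc T]

end StandardGaussianImage

lemma map_mulVec_conv {ι κ : Type*} [Fintype ι] [Fintype κ] (T : Matrix κ ι ℝ)
    (μ ν : Measure (ι → ℝ)) [SFinite μ] [SFinite ν] :
    (μ ∗ ν).map (T *ᵥ ·) = μ.map (T *ᵥ ·) ∗ ν.map (T *ᵥ ·) :=
  Measure.map_conv_continuousLinearMap (LinearMap.toContinuousLinearMap T.mulVecLin)

theorem conservation_of_sigma_invariance_general (d m : ℕ)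
    (G : Matrix (Fin d) (Fin m) ℝ) (γ : ℝ) (A : Matrix (Fin d) (Fin d) ℝ)
    (hA : A * (G * Gᵀ) + (G * Gᵀ) * Aᵀ = 0)
    (μ : Measure (Fin d → ℝ)) [IsProbabilityMeasure μ]
    (hμ : ∀ s : ℝ, 0 ≤ s →
      Measure.map (fun x => (exp (s • A)).mulVec x) μ = μ)
    (ν : Measure (Fin d → ℝ))
    (hν : ν = Measure.map (fun w : Fin m → ℝ => γ • G.mulVec w)
          (Measure.pi fun _ : Fin m => gaussianReal 0 1)) :
    ∀ s : ℝ, 0 ≤ s →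
      Measure.map (fun x => (exp (s • A)).mulVec x) (Measure.conv μ ν)
        = Measure.conv μ ν := by
  intro s hs
  have hγA : A * ((γ • G) * (γ • G)ᵀ) + ((γ • G) * (γ • G)ᵀ) * Aᵀ = 0 := by
    simp only [transpose_smul, Matrix.smul_mul, Matrix.mul_smul, ← smul_add, hA, smul_zero]
  simp only [hν, ← smul_mulVec]
  rw [map_mulVec_conv, hμ s hs,
    map_mulVec_map_mulVec_pi_gaussianReal (exp_smul_mul_mul_transpose_exp_smul hγA s)]

/-- Conservation of Σ-invariance: if a probability measure `μ` is invariant under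
the Σ-generalized rotations `exp (s • A)` (with `Σ = G Gᵀ`, `A Σ + Σ Aᵀ = 0`), and
`ν` is the centered Gaussian law of `w ↦ γ • G·w` with `w` i.i.d. standard Gaussian,
then the convolution `μ ∗ ν` is invariant under the same rotations. -/
theorem conservation_of_sigma_invariance (d m : ℕ) (hd : 1 ≤ d) (hm : 1 ≤ m)
    (G : Matrix (Fin d) (Fin m) ℝ) (γ : ℝ) (A : Matrix (Fin d) (Fin d) ℝ)
    (hA : A * (G * Gᵀ) + (G * Gᵀ) * Aᵀ = 0)
    (μ : Measure (Fin d → ℝ)) [IsProbabilityMeasure μ]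
    (hμ : ∀ s : ℝ, 0 ≤ s →
      Measure.map (fun x => (exp (s • A)).mulVec x) μ = μ)
    (ν : Measure (Fin d → ℝ))
    (hν : ν = Measure.map (fun w : Fin m → ℝ => γ • G.mulVec w)
          (Measure.pi fun _ : Fin m => gaussianReal 0 1)) :
    ∀ s : ℝ, 0 ≤ s →
      Measure.map (fun x => (exp (s • A)).mulVec x) (Measure.conv μ ν)
        = Measure.conv μ ν :=
  conservation_of_sigma_invariance_general d m G γ A hA μ hμ ν hν
end
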